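/- The proof system EDL is sound and complete with respect to the class H^{SUT}_n of all simple, n-uniform and tail-complete hypergraph models: for every formула φ ∈ L_KB, EDL ⊢ φ if and only if M,e ⊨_h φ for every model M ∈ H^{SUT}_n and every hyperedge e of M. -/

import Mathlib

namespace DoxHG

/-- Formulas of the epistemic-doxastic language `L_KB`. -/
inductive Form (Ag Atom : Type) : Type
  | atom : Atom → Form Ag Atom
  | neg  : Form Ag Atom → Form Ag Atom
  | and  : Form Ag Atom → Form Ag Atom → Form Ag Atom
  | B    : Ag → Form Ag Atom → Form Ag Atom
  | K    : Ag → Form Ag Atom → Form Ag Atom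

namespace Form

variable {Ag Atom : Type}

/-- φ ∨ ψ := ¬(¬φ ∧ ¬ψ) -/
def or (φ ψ : Form Ag Atom) : Form Ag Atom := .neg (.and (.neg φ) (.neg ψ))

/-- φ → ψ := ¬φ ∨ ψ -/
def imp (φ ψ : Form Ag Atom) : Form Ag Atom := Form.or (.neg φ) ψ

/-- φ ↔ ψ -/
def biimp (φ ψ : Form Ag Atom) : Form Ag Atom := .and (φ.imp ψ) (ψ.imp φ)

/-- ⊥ := p ∧ ¬p for an arbitrary but fixed propositional variable p. -/
def bot [Inhabited Atom] : Form Ag Atom := .and (.atom default) (.neg (.atom default))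

/-- Membership in the doxastic fragment `L_B` (no knowledge operators). -/
def noK : Form Ag Atom → Prop
  | .atom _  => True
  | .neg φ   => φ.noK
  | .and φ ψ => φ.noK ∧ ψ.noK
  | .B _ φ   => φ.noK
  | .K _ _   => False

/-- φ is an `a`-formula: all variables are local variables of `a` (as given by
`owner`) and all modal operators are `B a` or `K a`. -/
def isAFormula (owner : Atom → Ag) (a : Ag) : Form Ag Atom → Prop
  | .atom p  => owner p = a
  | .neg φ   => φ.isAFormula owner a
  | .and φ ψ => φ.isAFormula owner a ∧ ψ.isAFormula owner a
  | .B b φ   => b = a ∧ φ.isAFormula owner a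
  | .K b φ   => b = a ∧ φ.isAFormula owner a

end Form

/-- φ is (an instance of) a classical propositional tautology: it evaluates to
true under every boolean valuation that respects negation and conjunction
(treating atoms and modal formulas as opaque). -/
def Tautology {Ag Atom : Type} (φ : Form Ag Atom) : Prop :=
  ∀ v : Form Ag Atom → Bool,
    (∀ ψ, v (.neg ψ) = !v ψ) →
    (∀ ψ χ, v (.and ψ χ) = (v ψ && v χ)) →
    v φ = true

/-! ### Doxastic Kripke models -/

/-- A doxastic Kripke model (with set of worlds the type `W`, assumed nonempty
where required): doxastic accessibility relations `B a` and valuation `V`. -/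
structure KModel (Ag Atom W : Type) where
  B : Ag → W → W → Prop
  V : W → Set Atom

section Kripke

variable {Ag Atom W : Type}

/-- Kripke satisfaction `⊨ₖ`; `K a` is interpreted via the equivalence relation
generated by `B a` (i.e. `Relation.EqvGen`, the smallest equivalence relation
containing it). -/
def ksat (M : KModel Ag Atom W) : W → Form Ag Atom → Prop
  | w, .atom p  => p ∈ M.V w
  | w, .neg φ   => ¬ ksat M w φ
  | w, .and φ ψ => ksat M w φ ∧ ksat M w ψ
  | w, .B a φ   => ∀ u, M.B a w u → ksat M u φ
  | w, .K a φ   => ∀ u, Relation.EqvGen (M.B a) w u → ksat M u φ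

def KModel.Serial (M : KModel Ag Atom W) : Prop := ∀ (a : Ag) (w : W), ∃ u, M.B a w u

def KModel.Transit (M : KModel Ag Atom W) : Prop :=
  ∀ (a : Ag) (u v w : W), M.B a u v → M.B a v w → M.B a u w

def KModel.Eucl (M : KModel Ag Atom W) : Prop :=
  ∀ (a : Ag) (u v w : W), M.B a u v → M.B a u w → M.B a v w

/-- Locality: worlds related by `B a ∪ (B a)⁻¹` agree on the local variables of `a`. -/
def KModel.Local (owner : Atom → Ag) (M : KModel Ag Atom W) : Prop :=
  ∀ (a : Ag) (u v : W), (M.B a u v ∨ M.B a v u) →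
    M.V u ∩ {p | owner p = a} = M.V v ∩ {p | owner p = a}

/-- Properness: distinct worlds are distinguished by some agent. -/
def KModel.Proper (M : KModel Ag Atom W) : Prop :=
  ∀ u v : W, u ≠ v → ∃ a : Ag, ¬ Relation.EqvGen (M.B a) u v

end Kripke

/-! ### The Hilbert systems EDL, LocK45 and LocKD45 -/

section ProofSystems

variable {Ag Atom : Type}

/-- Provability in the Hilbert system EDL. -/
inductive EDLProv (owner : Atom → Ag) : Form Ag Atom → Prop
  | taut {φ : Form Ag Atom} : Tautology φ → EDLProv owner φ
  | axKB (a : Ag) (φ ψ : Form Ag Atom) :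
      EDLProv owner ((Form.B a (φ.imp ψ)).imp ((Form.B a φ).imp (Form.B a ψ)))
  | axDB (a : Ag) (φ : Form Ag Atom) :
      EDLProv owner (Form.neg (Form.B a (Form.and φ (Form.neg φ))))
  | ax4B (a : Ag) (φ : Form Ag Atom) :
      EDLProv owner ((Form.B a φ).imp (Form.B a (Form.B a φ)))
  | ax5B (a : Ag) (φ : Form Ag Atom) :
      EDLProv owner ((Form.neg (Form.B a φ)).imp (Form.B a (Form.neg (Form.B a φ))))
  | axKK (a : Ag) (φ ψ : Form Ag Atom) :
      EDLProv owner ((Form.K a (φ.imp ψ)).imp ((Form.K a φ).imp (Form.K a ψ)))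
  | axTK (a : Ag) (φ : Form Ag Atom) :
      EDLProv owner ((Form.K a φ).imp φ)
  | ax4K (a : Ag) (φ : Form Ag Atom) :
      EDLProv owner ((Form.K a φ).imp (Form.K a (Form.K a φ)))
  | ax5K (a : Ag) (φ : Form Ag Atom) :
      EDLProv owner ((Form.neg (Form.K a φ)).imp (Form.K a (Form.neg (Form.K a φ))))
  | axPI (a : Ag) (φ : Form Ag Atom) :
      EDLProv owner ((Form.B a φ).imp (Form.K a (Form.B a φ)))
  | axNI (a : Ag) (φ : Form Ag Atom) :
      EDLProv owner ((Form.neg (Form.B a φ)).imp (Form.K a (Form.neg (Form.B a φ))))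
  | axKIB (a : Ag) (φ : Form Ag Atom) :
      EDLProv owner ((Form.K a φ).imp (Form.B a φ))
  | axLoc (a : Ag) (p : Atom) (h : owner p = a) :
      EDLProv owner (Form.and ((Form.atom p).imp (Form.B a (Form.atom p)))
        ((Form.neg (Form.atom p)).imp (Form.B a (Form.neg (Form.atom p)))))
  | mp {φ ψ : Form Ag Atom} :
      EDLProv owner (φ.imp ψ) → EDLProv owner φ → EDLProv owner ψ
  | nec (a : Ag) {φ : Form Ag Atom} : EDLProv owner φ → EDLProv owner (Form.K a φ)

/-- Provability in the Hilbert systems over the doxastic fragment `L_B`: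
`BProv owner true` is LocKD45 (with axiom D_B) and `BProv owner false` is
LocK45 (without D_B). -/
inductive BProv (owner : Atom → Ag) (withD : Bool) : Form Ag Atom → Prop
  | taut {φ : Form Ag Atom} : φ.noK → Tautology φ → BProv owner withD φ
  | axKB (a : Ag) {φ ψ : Form Ag Atom} (hφ : φ.noK) (hψ : ψ.noK) :
      BProv owner withD ((Form.B a (φ.imp ψ)).imp ((Form.B a φ).imp (Form.B a ψ)))
  | axDB (a : Ag) {φ : Form Ag Atom} (hD : withD = true) (hφ : φ.noK) :
      BProv owner withD (Form.neg (Form.B a (Form.and φ (Form.neg φ))))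
  | ax4B (a : Ag) {φ : Form Ag Atom} (hφ : φ.noK) :
      BProv owner withD ((Form.B a φ).imp (Form.B a (Form.B a φ)))
  | ax5B (a : Ag) {φ : Form Ag Atom} (hφ : φ.noK) :
      BProv owner withD ((Form.neg (Form.B a φ)).imp (Form.B a (Form.neg (Form.B a φ))))
  | axLoc (a : Ag) (p : Atom) (h : owner p = a) :
      BProv owner withD (Form.and ((Form.atom p).imp (Form.B a (Form.atom p)))
        ((Form.neg (Form.atom p)).imp (Form.B a (Form.neg (Form.atom p)))))
  | mp {φ ψ : Form Ag Atom} :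
      BProv owner withD (φ.imp ψ) → BProv owner withD φ → BProv owner withD ψ
  | nec (a : Ag) {φ : Form Ag Atom} : BProv owner withD φ → BProv owner withD (Form.B a φ)

/-- Conjunction of a finite list of formulas (the empty conjunction is ¬⊥). -/
def conj [Inhabited Atom] : List (Form Ag Atom) → Form Ag Atom
  | []        => Form.neg Form.bot
  | [φ]       => φ
  | φ :: rest => Form.and φ (conj rest)

/-- Γ ⊢ φ in EDL: some finite subset Δ ⊆ Γ has EDL ⊢ (⋀Δ) → φ. -/
def ProvFrom [Inhabited Atom] (owner : Atom → Ag) (Γ : Set (Form Ag Atom))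
    (φ : Form Ag Atom) : Prop :=
  ∃ L : List (Form Ag Atom), (∀ ψ ∈ L, ψ ∈ Γ) ∧ EDLProv owner ((conj L).imp φ)

/-- Γ is EDL-consistent. -/
def EDLConsistent [Inhabited Atom] (owner : Atom → Ag) (Γ : Set (Form Ag Atom)) : Prop :=
  ¬ ProvFrom owner Γ Form.bot

/-- Γ is maximally EDL-consistent. -/
def MaxEDLConsistent [Inhabited Atom] (owner : Atom → Ag) (Γ : Set (Form Ag Atom)) : Prop :=
  EDLConsistent owner Γ ∧ ∀ Δ : Set (Form Ag Atom), Γ ⊂ Δ → ¬ EDLConsistent owner Δ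

end ProofSystems

/-! ### Directed hypergraph models -/

/-- The undirected hyperedge `ē = T(e) ∪ H(e)` induced by a directed hyperedge
`e = (T(e), H(e))`. -/
def ebar {V : Type} (e : Set V × Set V) : Set V := e.1 ∪ e.2

/-- A (directed) hypergraph model: a vertex set, a set of directed hyperedges
(pairs (tail, head)), a coloring and a valuation.  Well-formedness conditions
are stated separately. -/
structure HModel (Ag Atom V : Type) where
  Vset : Set V
  E : Set (Set V × Set V)
  χ : V → Ag
  ℓ : V → Set Atom

namespace HModel

variable {Ag Atom V : Type}

/-- `(Vset, E)` is a directed hypergraph: the vertex set is nonempty and every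
hyperedge consists of a finite tail and a finite head, disjoint from each
other, both made of vertices. -/
def IsHypergraph (M : HModel Ag Atom V) : Prop :=
  M.Vset.Nonempty ∧
    ∀ e ∈ M.E, e.1 ⊆ M.Vset ∧ e.2 ⊆ M.Vset ∧ e.1.Finite ∧ e.2.Finite ∧ Disjoint e.1 e.2

/-- χ is a coloring: distinct vertices of the same hyperedge get distinct colors. -/
def IsChromatic (M : HModel Ag Atom V) : Prop :=
  ∀ e ∈ M.E, Set.InjOn M.χ (ebar e)

/-- The valuation assigns to an `a`-colored vertex only local variables of `a`. -/
def ValOk (owner : Atom → Ag) (M : HModel Ag Atom V) : Prop :=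
  ∀ v ∈ M.Vset, M.ℓ v ⊆ {p | owner p = M.χ v}

/-- M is a (well-formed, chromatic) hypergraph model. -/
def IsModel (owner : Atom → Ag) (M : HModel Ag Atom V) : Prop :=
  M.IsHypergraph ∧ M.IsChromatic ∧ M.ValOk owner

/-- Simplicity: for distinct hyperedges, `ē₁ ⊄ ē₂`. -/
def Simple (M : HModel Ag Atom V) : Prop :=
  ∀ e₁ ∈ M.E, ∀ e₂ ∈ M.E, e₁ ≠ e₂ → ¬ ebar e₁ ⊆ ebar e₂

/-- n-uniformity: every hyperedge has exactly `n` vertices. -/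
def Uniform (M : HModel Ag Atom V) (n : ℕ) : Prop :=
  ∀ e ∈ M.E, (ebar e).ncard = n

/-- Tail-completeness: every vertex lies in the tail of some hyperedge. -/
def TailComplete (M : HModel Ag Atom V) : Prop :=
  ∀ v ∈ M.Vset, ∃ e ∈ M.E, v ∈ e.1

end HModel

section HSemantics

variable {Ag Atom V : Type}

/-- The doxastic accessibility relation `B^G_a` between hyperedges:
some `a`-colored vertex lies in `ē₁ ∩ T(e₂)`. -/
def Bacc (M : HModel Ag Atom V) (a : Ag) (e₁ e₂ : Set V × Set V) : Prop :=
  ∃ u : V, M.χ u = a ∧ u ∈ ebar e₁ ∧ u ∈ e₂.1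

/-- The epistemic accessibility relation `K^G_a` between hyperedges:
some `a`-colored vertex lies in `ē₁ ∩ ē₂`. -/
def Kacc (M : HModel Ag Atom V) (a : Ag) (e₁ e₂ : Set V × Set V) : Prop :=
  ∃ u : V, M.χ u = a ∧ u ∈ ebar e₁ ∧ u ∈ ebar e₂

/-- `ℓ(e) = ⋃_{u ∈ ē} ℓ(u)`. -/
def elabel (M : HModel Ag Atom V) (e : Set V × Set V) : Set Atom :=
  ⋃ u ∈ ebar e, M.ℓ u

/-- Hypergraph satisfaction `⊨ₕ`. -/
def hsat (M : HModel Ag Atom V) : Set V × Set V → Form Ag Atom → Prop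
  | e, .atom p  => p ∈ elabel M e
  | e, .neg φ   => ¬ hsat M e φ
  | e, .and φ ψ => hsat M e φ ∧ hsat M e ψ
  | e, .B a φ   => ∀ e' ∈ M.E, Bacc M a e e' → hsat M e' φ
  | e, .K a φ   => ∀ e' ∈ M.E, Kacc M a e e' → hsat M e' φ

end HSemantics

end DoxHG


namespace DoxHG

/-! ### Auxiliary development for Statement 12 -/

section Aux

variable {Ag Atom : Type}

/-- Iterated implication `ψ₁ → (ψ₂ → … → φ)`. -/
def listImp : List (Form Ag Atom) → Form Ag Atom → Form Ag Atom
  | [], φ => φ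
  | ψ :: L, φ => ψ.imp (listImp L φ)

/-! #### Tautology instances -/

lemma v_imp (v : Form Ag Atom → Bool) (hn : ∀ ψ, v (.neg ψ) = !v ψ)
    (ha : ∀ ψ χ, v (.and ψ χ) = (v ψ && v χ)) (φ ψ : Form Ag Atom) :
    v (φ.imp ψ) = (!(v φ) || v ψ) := by
  simp only [Form.imp, Form.or, hn, ha]
  cases v φ <;> cases v ψ <;> rfl

lemma v_listImp (v : Form Ag Atom → Bool) (hn : ∀ ψ, v (.neg ψ) = !v ψ)
    (ha : ∀ ψ χ, v (.and ψ χ) = (v ψ && v χ)) :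
    ∀ (L : List (Form Ag Atom)) (φ : Form Ag Atom),
      v (listImp L φ) = L.foldr (fun ψ b => (!(v ψ) || b)) (v φ)
  | [], _ => rfl
  | ψ :: L, φ => by
      rw [listImp, v_imp v hn ha, v_listImp v hn ha L φ, List.foldr_cons]

section TautInstances

variable (A B C D : Form Ag Atom)

lemma taut_id : Tautology (A.imp A) := by
  intro v hn ha; simp only [Form.imp, Form.or, hn, ha]; cases v A <;> rfl

lemma taut_k : Tautology (A.imp (B.imp A)) := by
  intro v hn ha; simp only [Form.imp, Form.or, hn, ha]
  cases v A <;> cases v B <;> rfl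

lemma taut_addHyp : Tautology ((A.imp C).imp (A.imp (B.imp C))) := by
  intro v hn ha; simp only [Form.imp, Form.or, hn, ha]
  cases v A <;> cases v B <;> cases v C <;> rfl

lemma taut_comp : Tautology ((A.imp B).imp ((B.imp C).imp (A.imp C))) := by
  intro v hn ha; simp only [Form.imp, Form.or, hn, ha]
  cases v A <;> cases v B <;> cases v C <;> rfl

lemma taut_case1 : Tautology ((A.imp C).imp ((A.imp (.neg C)).imp (.neg A))) := by
  intro v hn ha; simp only [Form.imp, Form.or, hn, ha]
  cases v A <;> cases v C <;> rfl

lemma taut_exf : Tautology (A.imp ((Form.neg A).imp B)) := by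
  intro v hn ha; simp only [Form.imp, Form.or, hn, ha]
  cases v A <;> cases v B <;> rfl

lemma taut_dne : Tautology ((Form.neg (.neg A)).imp A) := by
  intro v hn ha; simp only [Form.imp, Form.or, hn, ha]
  cases v A <;> rfl

lemma taut_andl : Tautology ((Form.and A B).imp A) := by
  intro v hn ha; simp only [Form.imp, Form.or, hn, ha]
  cases v A <;> cases v B <;> rfl

lemma taut_andr : Tautology ((Form.and A B).imp B) := by
  intro v hn ha; simp only [Form.imp, Form.or, hn, ha]
  cases v A <;> cases v B <;> rfl

lemma taut_andi : Tautology (A.imp (B.imp (Form.and A B))) := by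
  intro v hn ha; simp only [Form.imp, Form.or, hn, ha]
  cases v A <;> cases v B <;> rfl

lemma taut_t2 : Tautology (((Form.neg A).imp C).imp
    ((B.imp (C.imp D)).imp ((Form.neg D).imp (B.imp A)))) := by
  intro v hn ha; simp only [Form.imp, Form.or, hn, ha]
  cases v A <;> cases v B <;> cases v C <;> cases v D <;> rfl

lemma taut_t2' : Tautology ((A.imp B).imp
    ((B.imp (C.imp D)).imp ((Form.neg D).imp (C.imp (Form.neg A))))) := by
  intro v hn ha; simp only [Form.imp, Form.or, hn, ha]
  cases v A <;> cases v B <;> cases v C <;> cases v D <;> rfl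

end TautInstances

lemma bool_mp_step (c x y z : Bool) (h : (!x || (!y || z)) = true) :
    (!(c || x) || (!(c || y) || (c || z))) = true := by
  revert h; revert c x y z; decide

lemma bool_ded_step (c s x y : Bool) (h : (!(s || x) || y) = true) :
    (!(s || (c || x)) || (c || y)) = true := by
  revert h; revert c s x y; decide

lemma taut_mpL (L : List (Form Ag Atom)) (φ ψ : Form Ag Atom) :
    Tautology ((listImp L (φ.imp ψ)).imp ((listImp L φ).imp (listImp L ψ))) := by
  intro v hn ha
  simp only [v_imp v hn ha, v_listImp v hn ha]
  induction L with
  | nil =>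
      simp only [List.foldr_nil]
      cases v φ <;> cases v ψ <;> rfl
  | cons χ L ih =>
      simp only [List.foldr_cons]
      exact bool_mp_step (!(v χ)) _ _ _ ih

lemma taut_dedL (L : List (Form Ag Atom)) (ψ φ : Form Ag Atom) :
    Tautology ((ψ.imp (listImp L φ)).imp (listImp L (ψ.imp φ))) := by
  intro v hn ha
  simp only [v_imp v hn ha, v_listImp v hn ha]
  induction L with
  | nil =>
      simp only [List.foldr_nil]
      cases v ψ <;> cases v φ <;> rfl
  | cons χ L ih =>
      simp only [List.foldr_cons]
      exact bool_ded_step (!(v χ)) (!(v ψ)) _ _ ih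

/-! #### Derived rules of EDL -/

variable (owner : Atom → Ag)

lemma pmp {φ ψ : Form Ag Atom} (h1 : EDLProv owner (φ.imp ψ)) (h2 : EDLProv owner φ) :
    EDLProv owner ψ := EDLProv.mp h1 h2

lemma comp2 {A B C : Form Ag Atom} (h1 : EDLProv owner (A.imp B))
    (h2 : EDLProv owner (B.imp C)) : EDLProv owner (A.imp C) :=
  pmp owner (pmp owner (.taut (taut_comp A B C)) h1) h2

lemma nec_B (a : Ag) {φ : Form Ag Atom} (h : EDLProv owner φ) : EDLProv owner (.B a φ) :=
  pmp owner (EDLProv.axKIB a φ) (EDLProv.nec a h)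

lemma D_thm {φ : Form Ag Atom} (h : EDLProv owner φ) :
    ∀ L : List (Form Ag Atom), EDLProv owner (listImp L φ)
  | [] => h
  | ψ :: L => pmp owner (.taut (taut_k _ ψ)) (D_thm h L)

lemma imp_listImp_self (χ : Form Ag Atom) :
    ∀ L : List (Form Ag Atom), EDLProv owner (χ.imp (listImp L χ))
  | [] => .taut (taut_id χ)
  | ψ :: L => pmp owner (.taut (taut_addHyp χ ψ (listImp L χ))) (imp_listImp_self χ L)

lemma D_mem {ψ : Form Ag Atom} :
    ∀ L : List (Form Ag Atom), ψ ∈ L → EDLProv owner (listImp L ψ)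
  | χ :: L, h => by
      rcases List.mem_cons.mp h with h | h
      · subst h; exact imp_listImp_self owner ψ L
      · exact pmp owner (.taut (taut_k _ χ)) (D_mem L h)

lemma D_mp {L : List (Form Ag Atom)} {φ ψ : Form Ag Atom}
    (h1 : EDLProv owner (listImp L (φ.imp ψ))) (h2 : EDLProv owner (listImp L φ)) :
    EDLProv owner (listImp L ψ) :=
  pmp owner (pmp owner (.taut (taut_mpL L φ ψ)) h1) h2

lemma D_ded {L : List (Form Ag Atom)} {ψ φ : Form Ag Atom}
    (h : EDLProv owner (listImp (ψ :: L) φ)) : EDLProv owner (listImp L (ψ.imp φ)) :=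
  pmp owner (.taut (taut_dedL L ψ φ)) h

lemma D_weaken : ∀ {L L' : List (Form Ag Atom)} {φ : Form Ag Atom},
    (∀ ψ ∈ L, ψ ∈ L') → EDLProv owner (listImp L φ) → EDLProv owner (listImp L' φ)
  | [], L', φ, _, h => D_thm owner h L'
  | ψ :: L, L', φ, hsub, h => by
      have h1 := D_ded owner h
      have h2 := D_weaken (fun χ hχ => hsub χ (List.mem_cons_of_mem _ hχ)) h1 (L' := L')
      exact D_mp owner h2 (D_mem owner L' (hsub ψ (List.mem_cons_self)))

/-! #### Consistency, maximal consistent sets, Lindenbaum -/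

def Incon (Γ : Set (Form Ag Atom)) : Prop :=
  ∃ (L : List (Form Ag Atom)) (χ : Form Ag Atom),
    (∀ ψ ∈ L, ψ ∈ Γ) ∧ EDLProv owner (listImp L χ) ∧ EDLProv owner (listImp L (.neg χ))

def Con (Γ : Set (Form Ag Atom)) : Prop := ¬ Incon owner Γ

def MCS (Γ : Set (Form Ag Atom)) : Prop :=
  Con owner Γ ∧ ∀ φ, φ ∉ Γ → Form.neg φ ∈ Γ

lemma incon_insert_extract {Γ : Set (Form Ag Atom)} {φ : Form Ag Atom}
    (h : Incon owner (insert φ Γ)) :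
    ∃ L, (∀ ψ ∈ L, ψ ∈ Γ) ∧ EDLProv owner (listImp L (.neg φ)) := by
  classical
  obtain ⟨L, χ, hmem, h1, h2⟩ := h
  set L₂ := L.filter (fun ψ => decide (ψ ∈ Γ)) with hL₂
  have hsub : ∀ ψ ∈ L, ψ ∈ (φ :: L₂) := by
    intro ψ hψ
    by_cases hg : ψ ∈ Γ
    · exact List.mem_cons_of_mem _ (List.mem_filter.mpr ⟨hψ, by simp [hg]⟩)
    · rcases Set.mem_insert_iff.mp (hmem ψ hψ) with h | h
      · exact h ▸ List.mem_cons_self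
      · exact absurd h hg
  have h1' := D_ded owner (D_weaken owner hsub h1)
  have h2' := D_ded owner (D_weaken owner hsub h2)
  refine ⟨L₂, ?_, D_mp owner (D_mp owner (D_thm owner (.taut (taut_case1 φ χ)) L₂) h1') h2'⟩
  intro ψ hψ
  have := List.mem_filter.mp hψ
  exact of_decide_eq_true this.2

lemma con_insert_or {Γ : Set (Form Ag Atom)} (h : Con owner Γ) (φ : Form Ag Atom) :
    Con owner (insert φ Γ) ∨ Con owner (insert (.neg φ) Γ) := by
  by_contra hc
  push_neg at hc
  obtain ⟨h1, h2⟩ := hc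
  simp only [Con, not_not] at h1 h2
  obtain ⟨L₁, hm1, hL1⟩ := incon_insert_extract owner h1
  obtain ⟨L₂, hm2, hL2⟩ := incon_insert_extract owner h2
  refine h ⟨L₁ ++ L₂, .neg φ, ?_, ?_, ?_⟩
  · intro ψ hψ
    rcases List.mem_append.mp hψ with h | h
    · exact hm1 ψ h
    · exact hm2 ψ h
  · exact D_weaken owner (fun ψ hψ => List.mem_append_left _ hψ) hL1
  · exact D_weaken owner (fun ψ hψ => List.mem_append_right _ hψ) hL2

lemma chain_list_bound {α : Type} {c : Set (Set α)} (hc : IsChain (· ⊆ ·) c)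
    (hne : c.Nonempty) :
    ∀ L : List α, (∀ x ∈ L, x ∈ ⋃₀ c) → ∃ t ∈ c, ∀ x ∈ L, x ∈ t := by
  intro L
  induction L with
  | nil => exact fun _ => ⟨hne.choose, hne.choose_spec, by simp⟩
  | cons a L ih =>
      intro h
      obtain ⟨t, htc, ht⟩ := ih fun x hx => h x (List.mem_cons_of_mem _ hx)
      obtain ⟨s, hsc, has⟩ := h a (List.mem_cons_self)
      rcases eq_or_ne t s with rfl | hts
      · refine ⟨t, htc, ?_⟩
        intro x hx
        rcases List.mem_cons.mp hx with rfl | hx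
        exacts [has, ht x hx]
      · rcases hc htc hsc hts with h' | h'
        · refine ⟨s, hsc, ?_⟩
          intro x hx
          rcases List.mem_cons.mp hx with rfl | hx
          exacts [has, h' (ht x hx)]
        · refine ⟨t, htc, ?_⟩
          intro x hx
          rcases List.mem_cons.mp hx with rfl | hx
          exacts [h' has, ht x hx]

lemma lindenbaum {Γ : Set (Form Ag Atom)} (h : Con owner Γ) :
    ∃ Δ, Γ ⊆ Δ ∧ MCS owner Δ := by
  have hZ : ∀ c ⊆ {Δ : Set (Form Ag Atom) | Con owner Δ}, IsChain (· ⊆ ·) c → c.Nonempty →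
      ∃ ub ∈ {Δ : Set (Form Ag Atom) | Con owner Δ}, ∀ s ∈ c, s ⊆ ub := by
    intro c hcS hchain hcne
    refine ⟨⋃₀ c, ?_, fun s hs => Set.subset_sUnion_of_mem hs⟩
    rintro ⟨L, χ, hmem, h1, h2⟩
    obtain ⟨t, htc, ht⟩ := chain_list_bound hchain hcne L hmem
    exact hcS htc ⟨L, χ, ht, h1, h2⟩
  obtain ⟨m, hGm, hmax⟩ := zorn_subset_nonempty {Δ : Set (Form Ag Atom) | Con owner Δ} hZ Γ h
  refine ⟨m, hGm, hmax.1, fun φ hφ => ?_⟩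
  rcases con_insert_or owner hmax.1 φ with hcon | hcon
  · exact absurd (hmax.2 hcon (Set.subset_insert _ _) (Set.mem_insert _ _)) hφ
  · exact hmax.2 hcon (Set.subset_insert _ _) (Set.mem_insert _ _)

variable {owner}

lemma mcs_not_both {Δ : Set (Form Ag Atom)} (hΔ : MCS owner Δ) {φ : Form Ag Atom}
    (h1 : φ ∈ Δ) (h2 : Form.neg φ ∈ Δ) : False := by
  refine hΔ.1 ⟨[φ, .neg φ], φ, ?_, ?_, ?_⟩
  · intro ψ hψ
    rcases List.mem_cons.mp hψ with rfl | hψ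
    · exact h1
    · rcases List.mem_cons.mp hψ with rfl | hψ
      · exact h2
      · exact absurd hψ List.not_mem_nil
  · exact D_mem owner _ (List.mem_cons_self)
  · exact D_mem owner _ (List.mem_cons_of_mem _ (List.mem_cons_self))

lemma mcs_neg_iff {Δ : Set (Form Ag Atom)} (hΔ : MCS owner Δ) (φ : Form Ag Atom) :
    Form.neg φ ∈ Δ ↔ φ ∉ Δ :=
  ⟨fun h hφ => mcs_not_both hΔ hφ h, hΔ.2 φ⟩

lemma mcs_thm {Δ : Set (Form Ag Atom)} (hΔ : MCS owner Δ) {φ : Form Ag Atom}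
    (h : EDLProv owner φ) : φ ∈ Δ := by
  by_contra h'
  have hn := hΔ.2 φ h'
  refine hΔ.1 ⟨[.neg φ], φ, ?_, ?_, ?_⟩
  · intro ψ hψ
    rcases List.mem_cons.mp hψ with rfl | hψ
    · exact hn
    · exact absurd hψ List.not_mem_nil
  · exact pmp owner (.taut (taut_k φ (.neg φ))) h
  · exact D_mem owner _ (List.mem_cons_self)

lemma mcs_mp {Δ : Set (Form Ag Atom)} (hΔ : MCS owner Δ) {φ ψ : Form Ag Atom}
    (hφ : φ ∈ Δ) (himp : EDLProv owner (φ.imp ψ)) : ψ ∈ Δ := by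
  by_contra h'
  have hn := hΔ.2 ψ h'
  refine hΔ.1 ⟨[φ, .neg ψ], ψ, ?_, ?_, ?_⟩
  · intro χ hχ
    rcases List.mem_cons.mp hχ with rfl | hχ
    · exact hφ
    · rcases List.mem_cons.mp hχ with rfl | hχ
      · exact hn
      · exact absurd hχ List.not_mem_nil
  · exact pmp owner (.taut (taut_addHyp φ (.neg ψ) ψ)) himp
  · exact D_mem owner _ (List.mem_cons_of_mem _ (List.mem_cons_self))

lemma mcs_mp_mem {Δ : Set (Form Ag Atom)} (hΔ : MCS owner Δ) {φ ψ : Form Ag Atom}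
    (hφ : φ ∈ Δ) (himp : φ.imp ψ ∈ Δ) : ψ ∈ Δ := by
  by_contra h'
  have hn := hΔ.2 ψ h'
  refine hΔ.1 ⟨[φ.imp ψ, φ, .neg ψ], ψ, ?_, ?_, ?_⟩
  · intro χ hχ
    rcases List.mem_cons.mp hχ with rfl | hχ
    · exact himp
    · rcases List.mem_cons.mp hχ with rfl | hχ
      · exact hφ
      · rcases List.mem_cons.mp hχ with rfl | hχ
        · exact hn
        · exact absurd hχ List.not_mem_nil
  · exact .taut (taut_addHyp φ (.neg ψ) ψ)
  · exact D_mem owner _ (List.mem_cons_of_mem _ (List.mem_cons_of_mem _ (List.mem_cons_self)))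

lemma mcs_and_iff {Δ : Set (Form Ag Atom)} (hΔ : MCS owner Δ) (φ ψ : Form Ag Atom) :
    Form.and φ ψ ∈ Δ ↔ φ ∈ Δ ∧ ψ ∈ Δ := by
  constructor
  · intro h
    exact ⟨mcs_mp hΔ h (.taut (taut_andl φ ψ)), mcs_mp hΔ h (.taut (taut_andr φ ψ))⟩
  · rintro ⟨h1, h2⟩
    exact mcs_mp_mem hΔ h2 (mcs_mp hΔ h1 (.taut (taut_andi φ ψ)))

/-! #### Distribution of boxes over iterated implications inside an MCS -/

lemma mcs_listImp_B {Δ : Set (Form Ag Atom)} (hΔ : MCS owner Δ) {a : Ag} {φ : Form Ag Atom} :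
    ∀ {L : List (Form Ag Atom)}, Form.B a (listImp L φ) ∈ Δ →
      (∀ ψ ∈ L, Form.B a ψ ∈ Δ) → Form.B a φ ∈ Δ
  | [], h, _ => h
  | ψ :: L, h, hmem => by
      have h1 : (Form.B a ψ).imp (Form.B a (listImp L φ)) ∈ Δ :=
        mcs_mp hΔ h (EDLProv.axKB a ψ (listImp L φ))
      have h2 : Form.B a (listImp L φ) ∈ Δ :=
        mcs_mp_mem hΔ (hmem ψ (List.mem_cons_self)) h1
      exact mcs_listImp_B hΔ h2 (fun χ hχ => hmem χ (List.mem_cons_of_mem _ hχ))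

lemma mcs_listImp_K {Δ : Set (Form Ag Atom)} (hΔ : MCS owner Δ) {a : Ag} {φ : Form Ag Atom} :
    ∀ {L : List (Form Ag Atom)}, Form.K a (listImp L φ) ∈ Δ →
      (∀ ψ ∈ L, Form.K a ψ ∈ Δ) → Form.K a φ ∈ Δ
  | [], h, _ => h
  | ψ :: L, h, hmem => by
      have h1 : (Form.K a ψ).imp (Form.K a (listImp L φ)) ∈ Δ :=
        mcs_mp hΔ h (EDLProv.axKK a ψ (listImp L φ))
      have h2 : Form.K a (listImp L φ) ∈ Δ :=
        mcs_mp_mem hΔ (hmem ψ (List.mem_cons_self)) h1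
      exact mcs_listImp_K hΔ h2 (fun χ hχ => hmem χ (List.mem_cons_of_mem _ hχ))

/-! #### Existence lemmas -/

lemma exists_B_succ {Δ : Set (Form Ag Atom)} (hΔ : MCS owner Δ) {a : Ag} {φ : Form Ag Atom}
    (h : Form.B a φ ∉ Δ) :
    ∃ Δ', MCS owner Δ' ∧ (∀ ψ, Form.B a ψ ∈ Δ → ψ ∈ Δ') ∧ φ ∉ Δ' := by
  have hcon : Con owner (insert (.neg φ) {ψ | Form.B a ψ ∈ Δ}) := by
    intro hic
    obtain ⟨L, hmem, hL⟩ := incon_insert_extract owner hic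
    have hLφ : EDLProv owner (listImp L φ) :=
      D_mp owner (D_thm owner (.taut (taut_dne φ)) L) hL
    have hB : Form.B a (listImp L φ) ∈ Δ := mcs_thm hΔ (nec_B owner a hLφ)
    exact h (mcs_listImp_B hΔ hB hmem)
  obtain ⟨Δ', hsub, hΔ'⟩ := lindenbaum owner hcon
  refine ⟨Δ', hΔ', fun ψ hψ => hsub (Set.mem_insert_of_mem _ hψ), fun hc => ?_⟩
  exact mcs_not_both hΔ' hc (hsub (Set.mem_insert _ _))

lemma exists_K_succ {Δ : Set (Form Ag Atom)} (hΔ : MCS owner Δ) {a : Ag} {φ : Form Ag Atom}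
    (h : Form.K a φ ∉ Δ) :
    ∃ Δ', MCS owner Δ' ∧ (∀ ψ, Form.K a ψ ∈ Δ → ψ ∈ Δ') ∧ φ ∉ Δ' := by
  have hcon : Con owner (insert (.neg φ) {ψ | Form.K a ψ ∈ Δ}) := by
    intro hic
    obtain ⟨L, hmem, hL⟩ := incon_insert_extract owner hic
    have hLφ : EDLProv owner (listImp L φ) :=
      D_mp owner (D_thm owner (.taut (taut_dne φ)) L) hL
    have hK : Form.K a (listImp L φ) ∈ Δ := mcs_thm hΔ (EDLProv.nec a hLφ)
    exact h (mcs_listImp_K hΔ hK hmem)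
  obtain ⟨Δ', hsub, hΔ'⟩ := lindenbaum owner hcon
  refine ⟨Δ', hΔ', fun ψ hψ => hsub (Set.mem_insert_of_mem _ hψ), fun hc => ?_⟩
  exact mcs_not_both hΔ' hc (hsub (Set.mem_insert _ _))

lemma exists_B_serial {Δ : Set (Form Ag Atom)} (hΔ : MCS owner Δ) (a : Ag) :
    ∃ Δ', MCS owner Δ' ∧ ∀ ψ, Form.B a ψ ∈ Δ → ψ ∈ Δ' := by
  have hcon : Con owner {ψ | Form.B a ψ ∈ Δ} := by
    rintro ⟨L, χ, hmem, h1, h2⟩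
    have h3 : EDLProv owner (listImp L (Form.and χ (.neg χ))) :=
      D_mp owner (D_mp owner (D_thm owner (.taut (taut_andi χ (.neg χ))) L) h1) h2
    have h4 : Form.B a (Form.and χ (.neg χ)) ∈ Δ :=
      mcs_listImp_B hΔ (mcs_thm hΔ (nec_B owner a h3)) hmem
    exact mcs_not_both hΔ h4 (mcs_thm hΔ (EDLProv.axDB a χ))
  obtain ⟨Δ', hsub, hΔ'⟩ := lindenbaum owner hcon
  exact ⟨Δ', hΔ', fun ψ hψ => hsub hψ⟩

/-! #### Derived modal theorems about local atoms -/

variable (owner)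

lemma pairB (a : Ag) (φ ψ : Form Ag Atom) :
    EDLProv owner ((Form.B a φ).imp ((Form.B a ψ).imp (Form.B a (Form.and φ ψ)))) := by
  have h1 : EDLProv owner (Form.B a (φ.imp (ψ.imp (Form.and φ ψ)))) :=
    nec_B owner a (.taut (taut_andi φ ψ))
  have h2 := pmp owner (EDLProv.axKB a φ (ψ.imp (Form.and φ ψ))) h1
  exact comp2 owner h2 (EDLProv.axKB a ψ (Form.and φ ψ))

lemma thm_locP {p : Atom} {a : Ag} (h : owner p = a) :
    EDLProv owner ((Form.atom p).imp (Form.B a (.atom p))) :=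
  pmp owner (.taut (taut_andl _ _)) (EDLProv.axLoc a p h)

lemma thm_locN {p : Atom} {a : Ag} (h : owner p = a) :
    EDLProv owner ((Form.neg (.atom p)).imp (Form.B a (.neg (.atom p)))) :=
  pmp owner (.taut (taut_andr _ _)) (EDLProv.axLoc a p h)

lemma thm_BP_atom {p : Atom} {a : Ag} (h : owner p = a) :
    EDLProv owner ((Form.B a (.atom p)).imp (.atom p)) := by
  have l1 := thm_locN owner h
  have l2 := pairB owner a (.atom p) (.neg (.atom p))
  have l3 := EDLProv.axDB (owner := owner) a (Form.atom p)
  exact pmp owner (pmp owner (pmp owner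
    (.taut (taut_t2 (.atom p) (.B a (.atom p)) (.B a (.neg (.atom p)))
      (.B a (.and (.atom p) (.neg (.atom p)))))) l1) l2) l3

lemma thm_BN_atom {p : Atom} {a : Ag} (h : owner p = a) :
    EDLProv owner ((Form.B a (.neg (.atom p))).imp (.neg (.atom p))) := by
  have l1 := thm_locP owner h
  have l2 := pairB owner a (.atom p) (.neg (.atom p))
  have l3 := EDLProv.axDB (owner := owner) a (Form.atom p)
  exact pmp owner (pmp owner (pmp owner
    (.taut (taut_t2' (.atom p) (.B a (.atom p)) (.B a (.neg (.atom p)))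
      (.B a (.and (.atom p) (.neg (.atom p)))))) l1) l2) l3

lemma thm_atom_K {p : Atom} {a : Ag} (h : owner p = a) :
    EDLProv owner ((Form.atom p).imp (Form.K a (.atom p))) := by
  have l1 := thm_locP owner h
  have l2 := EDLProv.axPI (owner := owner) a (Form.atom p)
  have l3 : EDLProv owner ((Form.K a (Form.B a (.atom p))).imp (Form.K a (.atom p))) :=
    pmp owner (EDLProv.axKK a _ _) (EDLProv.nec a (thm_BP_atom owner h))
  exact comp2 owner (comp2 owner l1 l2) l3

lemma thm_natom_K {p : Atom} {a : Ag} (h : owner p = a) :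
    EDLProv owner ((Form.neg (.atom p)).imp (Form.K a (.neg (.atom p)))) := by
  have l1 := thm_locN owner h
  have l2 := EDLProv.axPI (owner := owner) a (Form.neg (.atom p))
  have l3 : EDLProv owner ((Form.K a (Form.B a (.neg (.atom p)))).imp
      (Form.K a (.neg (.atom p)))) :=
    pmp owner (EDLProv.axKK a _ _) (EDLProv.nec a (thm_BN_atom owner h))
  exact comp2 owner (comp2 owner l1 l2) l3

/-! #### The canonical frame -/

def World (owner : Atom → Ag) : Type := {Γ : Set (Form Ag Atom) // MCS owner Γ}

def canB (a : Ag) (w u : World owner) : Prop := ∀ φ, Form.B a φ ∈ w.1 → φ ∈ u.1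

def canK (a : Ag) (w u : World owner) : Prop := ∀ φ, Form.K a φ ∈ w.1 → φ ∈ u.1

variable {owner}

lemma canK_refl (a : Ag) (w : World owner) : canK owner a w w :=
  fun φ h => mcs_mp w.2 h (EDLProv.axTK a φ)

lemma canK_trans {a : Ag} {w u v : World owner} (h1 : canK owner a w u)
    (h2 : canK owner a u v) : canK owner a w v :=
  fun φ h => h2 φ (h1 _ (mcs_mp w.2 h (EDLProv.ax4K a φ)))

lemma canK_symm {a : Ag} {w u : World owner} (h : canK owner a w u) : canK owner a u w := by
  intro φ hφ
  by_contra hc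
  have h1 : Form.K a φ ∉ w.1 := fun hk => hc (mcs_mp w.2 hk (EDLProv.axTK a φ))
  have h2 : Form.neg (Form.K a φ) ∈ w.1 := (w.2).2 _ h1
  have h3 : Form.K a (.neg (.K a φ)) ∈ w.1 := mcs_mp w.2 h2 (EDLProv.ax5K a φ)
  exact mcs_not_both u.2 hφ (h _ h3)

lemma canB_canK {a : Ag} {w u : World owner} (h : canB owner a w u) : canK owner a w u :=
  fun φ hφ => h φ (mcs_mp w.2 hφ (EDLProv.axKIB a φ))

lemma canB_eucl {a : Ag} {w u v : World owner} (h1 : canB owner a w u)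
    (h2 : canB owner a w v) : canB owner a u v := by
  intro φ hφ
  have hw : Form.B a φ ∈ w.1 := by
    by_contra hc
    have hn : Form.B a (.neg (.B a φ)) ∈ w.1 := mcs_mp w.2 ((w.2).2 _ hc) (EDLProv.ax5B a φ)
    exact mcs_not_both u.2 hφ (h1 _ hn)
  exact h2 φ hw

lemma canK_B_iff {a : Ag} {w u : World owner} (h : canK owner a w u) (φ : Form Ag Atom) :
    Form.B a φ ∈ w.1 ↔ Form.B a φ ∈ u.1 := by
  constructor
  · intro hw
    exact h _ (mcs_mp w.2 hw (EDLProv.axPI a φ))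
  · intro hu
    by_contra hc
    have hn : Form.K a (.neg (.B a φ)) ∈ w.1 := mcs_mp w.2 ((w.2).2 _ hc) (EDLProv.axNI a φ)
    exact mcs_not_both u.2 hu (h _ hn)

lemma canK_K_iff {a : Ag} {w u : World owner} (h : canK owner a w u) (φ : Form Ag Atom) :
    Form.K a φ ∈ w.1 ↔ Form.K a φ ∈ u.1 := by
  constructor
  · intro hw
    exact h _ (mcs_mp w.2 hw (EDLProv.ax4K a φ))
  · intro hu
    by_contra hc
    have hn : Form.K a (.neg (.K a φ)) ∈ w.1 := mcs_mp w.2 ((w.2).2 _ hc) (EDLProv.ax5K a φ)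
    exact mcs_not_both u.2 hu (h _ hn)

lemma canK_atom_iff {a : Ag} {p : Atom} (hp : owner p = a) {w u : World owner}
    (h : canK owner a w u) : Form.atom p ∈ w.1 ↔ Form.atom p ∈ u.1 := by
  constructor
  · intro hw
    exact h _ (mcs_mp w.2 hw (thm_atom_K owner hp))
  · intro hu
    by_contra hc
    have hn : Form.K a (.neg (.atom p)) ∈ w.1 :=
      mcs_mp w.2 ((w.2).2 _ hc) (thm_natom_K owner hp)
    exact mcs_not_both u.2 hu (h _ hn)

lemma canB_iff {a : Ag} {w u : World owner} :
    canB owner a w u ↔ (canK owner a w u ∧ canB owner a u u) :=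
  ⟨fun h => ⟨canB_canK h, canB_eucl h h⟩,
   fun ⟨hk, hu⟩ φ hφ => hu φ ((canK_B_iff hk φ).mp hφ)⟩

lemma mcs_agree {w u : World owner} (hk : ∀ a, canK owner a w u) :
    ∀ φ : Form Ag Atom, φ ∈ w.1 ↔ φ ∈ u.1 := by
  intro φ
  induction φ with
  | atom p => exact canK_atom_iff rfl (hk (owner p))
  | neg ψ ih => rw [mcs_neg_iff w.2, mcs_neg_iff u.2, ih]
  | and ψ χ ih1 ih2 => rw [mcs_and_iff w.2, mcs_and_iff u.2, ih1, ih2]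
  | B a ψ ih => exact canK_B_iff (hk a) _
  | K a ψ ih => exact canK_K_iff (hk a) _

lemma world_eq {w u : World owner} (hk : ∀ a, canK owner a w u) : w = u :=
  Subtype.ext (Set.ext (mcs_agree hk))

/-! #### The canonical hypergraph model -/

variable (owner)

def cls (a : Ag) (w : World owner) : Set (Set (Form Ag Atom)) :=
  {Δ | ∃ h : MCS owner Δ, canK owner a w ⟨Δ, h⟩}

lemma mem_cls_self (a : Ag) (w : World owner) : w.1 ∈ cls owner a w :=
  ⟨w.2, canK_refl a w⟩

variable {owner}

lemma canK_of_cls_eq {a : Ag} {w u : World owner}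
    (h : cls owner a w = cls owner a u) : canK owner a w u := by
  have hw : w.1 ∈ cls owner a u := h ▸ mem_cls_self owner a w
  obtain ⟨h', hkk⟩ := hw
  have he : (⟨w.1, h'⟩ : World owner) = w := rfl
  exact canK_symm (he ▸ hkk)

lemma cls_eq_of_canK {a : Ag} {w u : World owner} (h : canK owner a w u) :
    cls owner a w = cls owner a u := by
  ext Δ
  constructor
  · rintro ⟨hΔ, hkk⟩
    exact ⟨hΔ, canK_trans (canK_symm h) hkk⟩
  · rintro ⟨hΔ, hkk⟩
    exact ⟨hΔ, canK_trans h hkk⟩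

variable (owner)

def vert (a : Ag) (w : World owner) : Ag × Set (Set (Form Ag Atom)) := (a, cls owner a w)

def Tset (w : World owner) : Set (Ag × Set (Set (Form Ag Atom))) :=
  {x | ∃ a, x = vert owner a w ∧ canB owner a w w}

def Hset (w : World owner) : Set (Ag × Set (Set (Form Ag Atom))) :=
  {x | ∃ a, x = vert owner a w ∧ ¬ canB owner a w w}

def ew (w : World owner) : Set (Ag × Set (Set (Form Ag Atom))) × Set (Ag × Set (Set (Form Ag Atom))) :=
  (Tset owner w, Hset owner w)

def CM : HModel Ag Atom (Ag × Set (Set (Form Ag Atom))) where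
  Vset := {x | ∃ a w, x = vert owner a w}
  E := Set.range (ew owner)
  χ := Prod.fst
  ℓ := fun x => {p | owner p = x.1 ∧ ∃ Δ ∈ x.2, Form.atom p ∈ Δ}

variable {owner}

lemma mem_ebar_ew {x : Ag × Set (Set (Form Ag Atom))} {w : World owner} :
    x ∈ ebar (ew owner w) ↔ ∃ a, x = vert owner a w := by
  constructor
  · rintro (⟨a, rfl, -⟩ | ⟨a, rfl, -⟩) <;> exact ⟨a, rfl⟩
  · rintro ⟨a, rfl⟩
    by_cases h : canB owner a w w
    · exact Or.inl ⟨a, rfl, h⟩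
    · exact Or.inr ⟨a, rfl, h⟩

lemma Bacc_ew {a : Ag} {w u : World owner} :
    Bacc (CM owner) a (ew owner w) (ew owner u) ↔ canB owner a w u := by
  constructor
  · rintro ⟨x, hχ, hx1, hx2⟩
    obtain ⟨b, rfl, hb⟩ := hx2
    have hba : b = a := hχ
    subst hba
    obtain ⟨c, hc⟩ := mem_ebar_ew.mp hx1
    have hcb : b = c := congrArg Prod.fst hc
    subst hcb
    have hcls : cls owner b u = cls owner b w := congrArg Prod.snd hc
    exact canB_iff.mpr ⟨canK_symm (canK_of_cls_eq hcls), hb⟩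
  · intro h
    refine ⟨vert owner a u, rfl, ?_, ⟨a, rfl, canB_eucl h h⟩⟩
    refine mem_ebar_ew.mpr ⟨a, ?_⟩
    show (a, cls owner a u) = (a, cls owner a w)
    rw [cls_eq_of_canK (canB_canK h)]

lemma Kacc_ew {a : Ag} {w u : World owner} :
    Kacc (CM owner) a (ew owner w) (ew owner u) ↔ canK owner a w u := by
  constructor
  · rintro ⟨x, hχ, hx1, hx2⟩
    obtain ⟨b, rfl⟩ := mem_ebar_ew.mp hx2
    have hba : b = a := hχ
    subst hba
    obtain ⟨c, hc⟩ := mem_ebar_ew.mp hx1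
    have hcb : b = c := congrArg Prod.fst hc
    subst hcb
    have hcls : cls owner b u = cls owner b w := congrArg Prod.snd hc
    exact canK_symm (canK_of_cls_eq hcls)
  · intro h
    refine ⟨vert owner a u, rfl, ?_, mem_ebar_ew.mpr ⟨a, rfl⟩⟩
    refine mem_ebar_ew.mpr ⟨a, ?_⟩
    show (a, cls owner a u) = (a, cls owner a w)
    rw [cls_eq_of_canK h]

/-! #### Basic satisfaction lemmas -/

section HsatLemmas

variable {V : Type} {M : HModel Ag Atom V} {e : Set V × Set V}

lemma hsat_atom {p : Atom} : hsat M e (.atom p) ↔ p ∈ elabel M e := Iff.rfl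

lemma hsat_neg {φ : Form Ag Atom} : hsat M e (.neg φ) ↔ ¬ hsat M e φ := Iff.rfl

lemma hsat_and {φ ψ : Form Ag Atom} :
    hsat M e (.and φ ψ) ↔ hsat M e φ ∧ hsat M e ψ := Iff.rfl

lemma hsat_B {a : Ag} {φ : Form Ag Atom} :
    hsat M e (.B a φ) ↔ ∀ e' ∈ M.E, Bacc M a e e' → hsat M e' φ := Iff.rfl

lemma hsat_K {a : Ag} {φ : Form Ag Atom} :
    hsat M e (.K a φ) ↔ ∀ e' ∈ M.E, Kacc M a e e' → hsat M e' φ := Iff.rfl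

lemma hsat_imp {φ ψ : Form Ag Atom} :
    hsat M e (φ.imp ψ) ↔ (hsat M e φ → hsat M e ψ) := by
  show ¬(¬¬ hsat M e φ ∧ ¬ hsat M e ψ) ↔ _
  tauto

end HsatLemmas

/-! #### Truth lemma -/

lemma truth (φ : Form Ag Atom) :
    ∀ w : World owner, hsat (CM owner) (ew owner w) φ ↔ φ ∈ w.1 := by
  induction φ with
  | atom p =>
      intro w
      rw [hsat_atom]
      constructor
      · intro hx
        simp only [elabel, Set.mem_iUnion, exists_prop] at hx
        obtain ⟨x, hxe, hpx⟩ := hx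
        obtain ⟨a, rfl⟩ := mem_ebar_ew.mp hxe
        obtain ⟨hpa, Δ, hΔc, hpΔ⟩ := hpx
        obtain ⟨hΔ, hk⟩ := hΔc
        exact (canK_atom_iff hpa hk).mpr hpΔ
      · intro hp
        refine Set.mem_biUnion (mem_ebar_ew.mpr ⟨owner p, rfl⟩) ?_
        exact ⟨rfl, w.1, mem_cls_self owner _ w, hp⟩
  | neg ψ ih =>
      intro w
      rw [hsat_neg, ih w]
      exact (mcs_neg_iff w.2 ψ).symm
  | and ψ χ ih1 ih2 =>
      intro w
      rw [hsat_and, ih1 w, ih2 w]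
      exact (mcs_and_iff w.2 ψ χ).symm
  | B a ψ ih =>
      intro w
      rw [hsat_B]
      constructor
      · intro H
        by_contra hB
        obtain ⟨Δ', hΔ', hsub, hφ⟩ := exists_B_succ w.2 hB
        have hacc : Bacc (CM owner) a (ew owner w) (ew owner (⟨Δ', hΔ'⟩ : World owner)) :=
          Bacc_ew.mpr (fun χ h => hsub χ h)
        exact hφ ((ih ⟨Δ', hΔ'⟩).mp (H _ ⟨⟨Δ', hΔ'⟩, rfl⟩ hacc))
      · rintro hB e' ⟨u, rfl⟩ hacc
        exact (ih u).mpr (Bacc_ew.mp hacc ψ hB)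
  | K a ψ ih =>
      intro w
      rw [hsat_K]
      constructor
      · intro H
        by_contra hK
        obtain ⟨Δ', hΔ', hsub, hφ⟩ := exists_K_succ w.2 hK
        have hacc : Kacc (CM owner) a (ew owner w) (ew owner (⟨Δ', hΔ'⟩ : World owner)) :=
          Kacc_ew.mpr (fun χ h => hsub χ h)
        exact hφ ((ih ⟨Δ', hΔ'⟩).mp (H _ ⟨⟨Δ', hΔ'⟩, rfl⟩ hacc))
      · rintro hK e' ⟨u, rfl⟩ hacc
        exact (ih u).mpr (Kacc_ew.mp hacc ψ hK)

/-! #### Properties of the canonical model -/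

lemma CM_isModel [Fintype Ag] [Nonempty Ag] (w₀ : World owner) :
    (CM owner).IsModel owner := by
  refine ⟨⟨⟨vert owner (Classical.arbitrary Ag) w₀, Classical.arbitrary Ag, w₀, rfl⟩, ?_⟩, ?_, ?_⟩
  · rintro e ⟨w, rfl⟩
    refine ⟨?_, ?_, ?_, ?_, ?_⟩
    · rintro x ⟨a, rfl, -⟩; exact ⟨a, w, rfl⟩
    · rintro x ⟨a, rfl, -⟩; exact ⟨a, w, rfl⟩
    · refine (Set.finite_range (fun a : Ag => vert owner a w)).subset ?_
      rintro x ⟨a, rfl, -⟩; exact ⟨a, rfl⟩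
    · refine (Set.finite_range (fun a : Ag => vert owner a w)).subset ?_
      rintro x ⟨a, rfl, -⟩; exact ⟨a, rfl⟩
    · rw [Set.disjoint_left]
      rintro x ⟨a, rfl, ha⟩ ⟨b, hb, hnb⟩
      have hab : a = b := congrArg Prod.fst hb
      subst hab
      exact hnb ha
  · rintro e ⟨w, rfl⟩ x hx y hy hxy
    obtain ⟨a, rfl⟩ := mem_ebar_ew.mp hx
    obtain ⟨b, rfl⟩ := mem_ebar_ew.mp hy
    have : a = b := hxy
    subst this
    rfl
  · rintro x - p hp
    exact hp.1

lemma CM_simple : (CM owner).Simple := by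
  rintro e1 ⟨w, rfl⟩ e2 ⟨u, rfl⟩ hne hsub
  apply hne
  have hkk : ∀ a, canK owner a w u := by
    intro a
    have hm : vert owner a w ∈ ebar (ew owner u) := hsub (mem_ebar_ew.mpr ⟨a, rfl⟩)
    obtain ⟨b, hb⟩ := mem_ebar_ew.mp hm
    have hab : a = b := congrArg Prod.fst hb
    subst hab
    exact canK_of_cls_eq (congrArg Prod.snd hb)
  rw [world_eq hkk]

lemma CM_uniform [Fintype Ag] : (CM owner).Uniform (Fintype.card Ag) := by
  rintro e ⟨w, rfl⟩
  have himg : ebar (ew owner w) = (fun a : Ag => vert owner a w) '' Set.univ := by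
    ext x
    rw [mem_ebar_ew]
    constructor
    · rintro ⟨a, rfl⟩; exact ⟨a, trivial, rfl⟩
    · rintro ⟨a, -, rfl⟩; exact ⟨a, rfl⟩
  rw [himg, Set.ncard_image_of_injective _ (fun a b h => congrArg Prod.fst h),
    Set.ncard_univ, Nat.card_eq_fintype_card]

lemma CM_tailComplete : (CM owner).TailComplete := by
  rintro x ⟨a, w, rfl⟩
  obtain ⟨Δ', hΔ', hsub⟩ := exists_B_serial w.2 a
  have hB : canB owner a w (⟨Δ', hΔ'⟩ : World owner) := fun φ h => hsub φ h
  refine ⟨ew owner ⟨Δ', hΔ'⟩, ⟨⟨Δ', hΔ'⟩, rfl⟩, ⟨a, ?_, canB_eucl hB hB⟩⟩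
  show (a, cls owner a w) = (a, cls owner a (⟨Δ', hΔ'⟩ : World owner))
  rw [cls_eq_of_canK (canB_canK hB)]

/-! #### Soundness -/

section Soundness

variable {V : Type} [Fintype Ag] {M : HModel Ag Atom V}

lemma ebar_subset {owner : Atom → Ag} (hM : M.IsModel owner) {e : Set V × Set V}
    (he : e ∈ M.E) : ebar e ⊆ M.Vset :=
  Set.union_subset (hM.1.2 e he).1 (hM.1.2 e he).2.1

lemma exists_unique_avert {owner : Atom → Ag} (hM : M.IsModel owner)
    (hU : M.Uniform (Fintype.card Ag)) {e : Set V × Set V} (he : e ∈ M.E) (a : Ag) :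
    ∃ x, (x ∈ ebar e ∧ M.χ x = a) ∧ ∀ y, y ∈ ebar e → M.χ y = a → y = x := by
  have hinj := hM.2.1 e he
  have himg : M.χ '' ebar e = Set.univ := by
    apply Set.eq_of_subset_of_ncard_le (Set.subset_univ _) ?_ Set.finite_univ
    rw [Set.ncard_image_of_injOn hinj, hU e he, Set.ncard_univ, Nat.card_eq_fintype_card]
  have ha : a ∈ M.χ '' ebar e := by rw [himg]; trivial
  obtain ⟨x, hxe, hxa⟩ := ha
  exact ⟨x, ⟨hxe, hxa⟩, fun y hy hya => hinj hy hxe (by rw [hya, hxa])⟩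

noncomputable def avert {owner : Atom → Ag} (hM : M.IsModel owner)
    (hU : M.Uniform (Fintype.card Ag)) {e : Set V × Set V} (he : e ∈ M.E) (a : Ag) : V :=
  (exists_unique_avert hM hU he a).choose

lemma avert_mem {owner : Atom → Ag} (hM : M.IsModel owner) (hU : M.Uniform (Fintype.card Ag))
    {e : Set V × Set V} (he : e ∈ M.E) (a : Ag) : avert hM hU he a ∈ ebar e :=
  (exists_unique_avert hM hU he a).choose_spec.1.1

lemma avert_χ {owner : Atom → Ag} (hM : M.IsModel owner) (hU : M.Uniform (Fintype.card Ag))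
    {e : Set V × Set V} (he : e ∈ M.E) (a : Ag) : M.χ (avert hM hU he a) = a :=
  (exists_unique_avert hM hU he a).choose_spec.1.2

lemma avert_unique {owner : Atom → Ag} (hM : M.IsModel owner) (hU : M.Uniform (Fintype.card Ag))
    {e : Set V × Set V} (he : e ∈ M.E) {a : Ag} {y : V} (hy : y ∈ ebar e)
    (hya : M.χ y = a) : y = avert hM hU he a :=
  (exists_unique_avert hM hU he a).choose_spec.2 y hy hya

lemma Bacc_iff_av {owner : Atom → Ag} (hM : M.IsModel owner) (hU : M.Uniform (Fintype.card Ag))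
    {e e' : Set V × Set V} (he : e ∈ M.E) {a : Ag} :
    Bacc M a e e' ↔ avert hM hU he a ∈ e'.1 := by
  constructor
  · rintro ⟨x, hxa, hx1, hx2⟩
    rwa [← avert_unique hM hU he hx1 hxa]
  · intro h
    exact ⟨avert hM hU he a, avert_χ hM hU he a, avert_mem hM hU he a, h⟩

lemma Kacc_iff_av {owner : Atom → Ag} (hM : M.IsModel owner) (hU : M.Uniform (Fintype.card Ag))
    {e e' : Set V × Set V} (he : e ∈ M.E) (he' : e' ∈ M.E) {a : Ag} :
    Kacc M a e e' ↔ avert hM hU he a = avert hM hU he' a := by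
  constructor
  · rintro ⟨x, hxa, hx1, hx2⟩
    rw [← avert_unique hM hU he hx1 hxa, avert_unique hM hU he' hx2 hxa]
  · intro h
    exact ⟨avert hM hU he a, avert_χ hM hU he a, avert_mem hM hU he a,
      h ▸ avert_mem hM hU he' a⟩

lemma avert_eq_of_Bacc {owner : Atom → Ag} (hM : M.IsModel owner)
    (hU : M.Uniform (Fintype.card Ag)) {e e' : Set V × Set V} (he : e ∈ M.E) (he' : e' ∈ M.E)
    {a : Ag} (h : Bacc M a e e') : avert hM hU he' a = avert hM hU he a := by
  have h1 := (Bacc_iff_av hM hU he).mp h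
  exact ((avert_unique hM hU he' (Set.mem_union_left _ h1) (avert_χ hM hU he a)).symm)

lemma atom_avert {owner : Atom → Ag} (hM : M.IsModel owner) (hU : M.Uniform (Fintype.card Ag))
    {e : Set V × Set V} (he : e ∈ M.E) {p : Atom} {a : Ag} (hp : owner p = a) :
    hsat M e (.atom p) ↔ p ∈ M.ℓ (avert hM hU he a) := by
  rw [hsat_atom]
  constructor
  · intro hx
    simp only [elabel, Set.mem_iUnion, exists_prop] at hx
    obtain ⟨x, hxe, hpx⟩ := hx
    have hxv : x ∈ M.Vset := ebar_subset hM he hxe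
    have hχx : owner p = M.χ x := hM.2.2 x hxv hpx
    have : x = avert hM hU he a := avert_unique hM hU he hxe (by rw [← hχx, hp])
    rwa [← this]
  · intro h
    exact Set.mem_biUnion (avert_mem hM hU he a) h

theorem hsound {owner : Atom → Ag} {φ : Form Ag Atom} (h : EDLProv owner φ)
    (M : HModel Ag Atom V) (hM : M.IsModel owner) (hU : M.Uniform (Fintype.card Ag))
    (hT : M.TailComplete) : ∀ e ∈ M.E, hsat M e φ := by
  induction h with
  | @taut φ ht =>
      intro e he
      classical
      have hv := ht (fun ψ => if hsat M e ψ then true else false)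
        (fun ψ => by by_cases h : hsat M e ψ <;> simp [hsat_neg, h])
        (fun ψ χ => by
          by_cases h : hsat M e ψ <;> by_cases h' : hsat M e χ <;> simp [hsat_and, h, h'])
      by_cases h : hsat M e φ
      · exact h
      · simp [h] at hv
  | axKB a φ ψ =>
      intro e he
      rw [hsat_imp]
      intro h1
      rw [hsat_imp]
      intro h2 e' he' hacc
      exact hsat_imp.mp (h1 e' he' hacc) (h2 e' he' hacc)
  | axDB a φ =>
      intro e he
      rw [hsat_neg]
      intro hB
      obtain ⟨e', he', hv⟩ := hT (avert hM hU he a) (ebar_subset hM he (avert_mem hM hU he a))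
      have hacc : Bacc M a e e' := (Bacc_iff_av hM hU he).mpr hv
      have hc := hB e' he' hacc
      exact (hsat_and.mp hc).2 (hsat_and.mp hc).1
  | ax4B a φ =>
      intro e he
      rw [hsat_imp]
      intro h e' he' hacc e'' he'' hacc'
      apply h e'' he''
      have h2 := avert_eq_of_Bacc hM hU he he' hacc
      have h3 := (Bacc_iff_av hM hU he').mp hacc'
      exact (Bacc_iff_av hM hU he).mpr (h2 ▸ h3)
  | ax5B a φ =>
      intro e he
      rw [hsat_imp, hsat_neg]
      intro hn e' he' hacc
      rw [hsat_neg]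
      intro hB'
      apply hn
      intro e'' he'' hacc''
      apply hB' e'' he''
      have h2 := avert_eq_of_Bacc hM hU he he' hacc
      have h3 := (Bacc_iff_av hM hU he).mp hacc''
      exact (Bacc_iff_av hM hU he').mpr (h2.symm ▸ h3)
  | axKK a φ ψ =>
      intro e he
      rw [hsat_imp]
      intro h1
      rw [hsat_imp]
      intro h2 e' he' hacc
      exact hsat_imp.mp (h1 e' he' hacc) (h2 e' he' hacc)
  | axTK a φ =>
      intro e he
      rw [hsat_imp]
      intro h
      exact h e he ((Kacc_iff_av hM hU he he).mpr rfl)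
  | ax4K a φ =>
      intro e he
      rw [hsat_imp]
      intro h e' he' hacc e'' he'' hacc'
      apply h e'' he''
      rw [Kacc_iff_av hM hU he he''] 
      rw [Kacc_iff_av hM hU he he'] at hacc
      rw [Kacc_iff_av hM hU he' he''] at hacc'
      exact hacc.trans hacc'
  | ax5K a φ =>
      intro e he
      rw [hsat_imp, hsat_neg]
      intro hn e' he' hacc
      rw [hsat_neg]
      intro hK'
      apply hn
      intro e'' he'' hacc''
      apply hK' e'' he''
      rw [Kacc_iff_av hM hU he he'] at hacc
      rw [Kacc_iff_av hM hU he he''] at hacc''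
      rw [Kacc_iff_av hM hU he' he'']
      exact hacc.symm.trans hacc''
  | axPI a φ =>
      intro e he
      rw [hsat_imp]
      intro h e' he' hk e'' he'' hb
      apply h e'' he''
      rw [Kacc_iff_av hM hU he he'] at hk
      have h3 := (Bacc_iff_av hM hU he').mp hb
      exact (Bacc_iff_av hM hU he).mpr (hk ▸ h3)
  | axNI a φ =>
      intro e he
      rw [hsat_imp, hsat_neg]
      intro hn e' he' hk
      rw [hsat_neg]
      intro hB'
      apply hn
      intro e'' he'' hb
      apply hB' e'' he''
      rw [Kacc_iff_av hM hU he he'] at hk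
      have h3 := (Bacc_iff_av hM hU he).mp hb
      exact (Bacc_iff_av hM hU he').mpr (hk ▸ h3)
  | axKIB a φ =>
      intro e he
      rw [hsat_imp]
      intro h e' he' hb
      apply h e' he'
      have h1 := (Bacc_iff_av hM hU he).mp hb
      have h2 : avert hM hU he a ∈ ebar e' := Set.mem_union_left _ h1
      exact ⟨avert hM hU he a, avert_χ hM hU he a, avert_mem hM hU he a, h2⟩
  | axLoc a p hp =>
      intro e he
      rw [hsat_and]
      constructor
      · rw [hsat_imp]
        intro hpe e' he' hacc
        rw [atom_avert hM hU he' hp]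
        rw [atom_avert hM hU he hp] at hpe
        rwa [avert_eq_of_Bacc hM hU he he' hacc]
      · rw [hsat_imp, hsat_neg]
        intro hpe e' he' hacc
        rw [hsat_neg, atom_avert hM hU he' hp]
        rw [atom_avert hM hU he hp] at hpe
        rwa [avert_eq_of_Bacc hM hU he he' hacc]
  | mp h1 h2 ih1 ih2 =>
      intro e he
      exact hsat_imp.mp (ih1 e he) (ih2 e he)
  | nec a h ih =>
      intro e he e' he' hacc
      exact ih e' he'

end Soundness

end Aux

end DoxHG

namespace DoxHG

/-- EDL is sound and complete with respect to the class
`H^{SUT}_n` of all simple, `n`-uniform and tail-complete hypergraph models. -/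
theorem statement_12 {Ag Atom : Type} [Fintype Ag] [Nonempty Ag] [Countable Atom]
    (owner : Atom → Ag) (φ : Form Ag Atom) :
    EDLProv owner φ ↔
      ∀ (V : Type) (M : HModel Ag Atom V),
        M.IsModel owner → M.Simple → M.Uniform (Fintype.card Ag) → M.TailComplete →
        ∀ e ∈ M.E, hsat M e φ := by
  constructor
  · intro h V M hMod hS hU hT e he
    exact hsound h M hMod hU hT e he
  · intro H
    by_contra hnp
    have hcon : Con owner {Form.neg φ} := by
      rintro ⟨L, χ, hmem, h1, h2⟩
      have hsub : ∀ ψ ∈ L, ψ ∈ [Form.neg φ] := by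
        intro ψ hψ
        have := hmem ψ hψ
        simp only [Set.mem_singleton_iff] at this
        simp [this]
      have hA : EDLProv owner ((Form.neg φ).imp χ) := D_weaken owner hsub h1
      have hB : EDLProv owner ((Form.neg φ).imp (.neg χ)) := D_weaken owner hsub h2
      have hC : EDLProv owner (Form.neg (.neg φ)) :=
        pmp owner (pmp owner (.taut (taut_case1 (.neg φ) χ)) hA) hB
      exact hnp (pmp owner (.taut (taut_dne φ)) hC)
    obtain ⟨Δ, hsubΔ, hΔ⟩ := lindenbaum owner hcon
    set w : World owner := ⟨Δ, hΔ⟩ with hw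
    have hsat' := H (Ag × Set (Set (Form Ag Atom))) (CM owner)
      (CM_isModel w) (CM_simple) (CM_uniform) (CM_tailComplete)
      (ew owner w) ⟨w, rfl⟩
    have hmem : Form.neg φ ∈ Δ := hsubΔ rfl
    have hφΔ : φ ∈ Δ := (truth φ w).mp hsat'
    exact mcs_not_both hΔ hφΔ hmem

end DoxHG
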